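/- If f, g, h ∈ L¹(ℝ₊), then the polyconvolution P(f,g,h)(x) = (1/π) ∫_{ℝ₊³} Φ(x,u,v,w) f(u) g(v) h(w) du dv dw belongs to L¹(ℝ₊) and satisfies ‖P(f,g,h)‖_{L¹(ℝ₊)} ≤ ‖f‖_{L¹(ℝ₊)} ‖g‖_{L¹(ℝ₊)} ‖h‖_{L¹(ℝ₊)}. -/

import Mathlib

open MeasureTheory Real Set

noncomputable def Phi (x u v w : ℝ) : ℝ :=
  (v + w) / ((v + w) ^ 2 + (x + u) ^ 2) + (v + w) / ((v + w) ^ 2 + (x - u) ^ 2)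

noncomputable def P (f g h : ℝ → ℝ) (x : ℝ) : ℝ :=
  (1 / π) * ∫ u in Ioi (0 : ℝ), ∫ v in Ioi (0 : ℝ), ∫ w in Ioi (0 : ℝ),
    Phi x u v w * f u * g v * h w

noncomputable def Fc (f : ℝ → ℝ) (y : ℝ) : ℝ :=
  Real.sqrt (2 / π) * ∫ x in Ioi (0 : ℝ), Real.cos (x * y) * f x

noncomputable def Lap (f : ℝ → ℝ) (y : ℝ) : ℝ :=
  ∫ x in Ioi (0 : ℝ), Real.exp (-(x * y)) * f x

/-!
For `v + w > 0` the kernel `Φ(·, u, v, w)` is nonnegative with `∫₀^∞ Φ dx = π`, being the derivative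
of `arctan ((x + u)/(v + w)) + arctan ((x - u)/(v + w))`. So `π P(f,g,h)` is the image of
`f ⊗ g ⊗ h ∈ L¹(ℝ₊³)` under an integral operator whose kernel has `x`-integrals at most `π`, and by
Fubini–Tonelli its `L¹` norm is at most `π ‖f ⊗ g ⊗ h‖₁ = π ‖f‖₁ ‖g‖₁ ‖h‖₁`.
-/

open Filter Function

section KernelBound

variable {X Y : Type*} [MeasurableSpace X] [MeasurableSpace Y] {μ : Measure X} {ν : Measure Y}
  [SFinite μ] [SFinite ν] {k : X → Y → ℝ} {F : Y → ℝ} {C : ℝ}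

theorem integrable_prod_kernel_mul (hk : AEStronglyMeasurable (uncurry k) (μ.prod ν))
    (hkC : ∀ᵐ y ∂ν, Integrable (k · y) μ ∧ ∫ x, |k x y| ∂μ ≤ C) (hF : Integrable F ν) :
    Integrable (uncurry fun x y => k x y * F y) (μ.prod ν) := by
  have hkF : AEStronglyMeasurable (uncurry fun x y => k x y * F y) (μ.prod ν) :=
    hk.mul hF.1.comp_snd
  refine (integrable_prod_iff' hkF).2 ⟨?_, ?_⟩
  · filter_upwards [hkC] with y hy using hy.1.mul_const (F y)
  · refine Integrable.mono' (hF.norm.const_mul C) hkF.norm.prod_swap.integral_prod_right' ?_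
    filter_upwards [hkC] with y hy
    simp only [uncurry_apply_pair, norm_mul, integral_mul_const, Real.norm_eq_abs, abs_abs]
    rw [abs_of_nonneg (by positivity)]
    exact mul_le_mul_of_nonneg_right hy.2 (abs_nonneg _)

theorem integral_abs_integral_kernel_mul_le (hk : AEStronglyMeasurable (uncurry k) (μ.prod ν))
    (hkC : ∀ᵐ y ∂ν, Integrable (k · y) μ ∧ ∫ x, |k x y| ∂μ ≤ C) (hF : Integrable F ν) :
    ∫ x, |∫ y, k x y * F y ∂ν| ∂μ ≤ C * ∫ y, |F y| ∂ν := by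
  have hint := integrable_prod_kernel_mul hk hkC hF
  calc ∫ x, |∫ y, k x y * F y ∂ν| ∂μ
      ≤ ∫ x, ∫ y, |k x y * F y| ∂ν ∂μ :=
        integral_mono_of_nonneg (ae_of_all _ fun x => abs_nonneg _)
          hint.integral_norm_prod_left (ae_of_all _ fun x => abs_integral_le_integral_abs)
    _ = ∫ y, (∫ x, |k x y| ∂μ) * |F y| ∂ν := by
        rw [integral_integral_swap hint.abs]
        simp only [abs_mul, integral_mul_const]
    _ ≤ ∫ y, C * |F y| ∂ν := by
        refine integral_mono_of_nonneg (ae_of_all _ fun y => by positivity)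
          (hF.abs.const_mul C) ?_
        filter_upwards [hkC] with y hy
        exact mul_le_mul_of_nonneg_right hy.2 (abs_nonneg _)
    _ = C * ∫ y, |F y| ∂ν := integral_const_mul C _

end KernelBound

section TripleProduct

variable {X₁ X₂ X₃ : Type*} [MeasurableSpace X₁] [MeasurableSpace X₂] [MeasurableSpace X₃]
  {μ₁ : Measure X₁} {μ₂ : Measure X₂} {μ₃ : Measure X₃} [SFinite μ₁] [SFinite μ₂]
  [SFinite μ₃]

theorem integral_prod_prod {G : X₁ × X₂ × X₃ → ℝ}
    (hG : Integrable G (μ₁.prod (μ₂.prod μ₃))) :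
    ∫ y, G y ∂μ₁.prod (μ₂.prod μ₃) = ∫ u, ∫ v, ∫ w, G (u, v, w) ∂μ₃ ∂μ₂ ∂μ₁ := by
  rw [integral_prod G hG]
  refine integral_congr_ae ?_
  filter_upwards [hG.prod_right_ae] with u hu using integral_prod _ hu

theorem integral_abs_mul_prod_prod (f : X₁ → ℝ) (g : X₂ → ℝ) (h : X₃ → ℝ) :
    ∫ y, |f y.1 * (g y.2.1 * h y.2.2)| ∂μ₁.prod (μ₂.prod μ₃) =
      (∫ u, |f u| ∂μ₁) * ((∫ v, |g v| ∂μ₂) * ∫ w, |h w| ∂μ₃) := by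
  simp only [abs_mul]
  rw [integral_prod_mul (fun u => |f u|) (fun z : X₂ × X₃ => |g z.1| * |h z.2|),
    integral_prod_mul (fun v => |g v|) (fun w => |h w|)]

end TripleProduct

lemma Phi_nonneg {v w : ℝ} (hvw : 0 ≤ v + w) (x u : ℝ) : 0 ≤ Phi x u v w := by
  unfold Phi; positivity

lemma measurable_Phi : Measurable fun p : ℝ × ℝ × ℝ × ℝ => Phi p.1 p.2.1 p.2.2.1 p.2.2.2 := by
  unfold Phi; fun_prop

lemma hasDerivAt_arctan_add_div {s : ℝ} (hs : s ≠ 0) (c x : ℝ) :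
    HasDerivAt (fun x => arctan ((x + c) / s)) (s / (s ^ 2 + (x + c) ^ 2)) x := by
  refine (((hasDerivAt_id' x).add_const c).div_const s).arctan.congr_deriv ?_
  field_simp

lemma tendsto_arctan_add_div_atTop {s : ℝ} (hs : 0 < s) (c : ℝ) :
    Tendsto (fun x => arctan ((x + c) / s)) atTop (nhds (π / 2)) :=
  (tendsto_arctan_atTop.mono_right nhdsWithin_le_nhds).comp
    ((tendsto_atTop_add_const_right _ c tendsto_id).atTop_div_const hs)

lemma integrableOn_Phi_and_integral_eq_pi {v w : ℝ} (hvw : 0 < v + w) (u : ℝ) :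
    IntegrableOn (Phi · u v w) (Ioi 0) ∧ ∫ x in Ioi (0 : ℝ), Phi x u v w = π := by
  set G := fun x => arctan ((x + u) / (v + w)) + arctan ((x + -u) / (v + w))
  have hderiv : ∀ x ∈ Ici (0 : ℝ), HasDerivAt G (Phi x u v w) x := fun x _ => by
    rw [Phi, sub_eq_add_neg]
    exact (hasDerivAt_arctan_add_div hvw.ne' u x).add (hasDerivAt_arctan_add_div hvw.ne' (-u) x)
  have hpos : ∀ x ∈ Ioi (0 : ℝ), 0 ≤ Phi x u v w := fun x _ => Phi_nonneg hvw.le x u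
  have hlim : Tendsto G atTop (nhds π) := by
    simpa using (tendsto_arctan_add_div_atTop hvw u).add (tendsto_arctan_add_div_atTop hvw (-u))
  refine ⟨integrableOn_Ioi_deriv_of_nonneg' hderiv hpos hlim, ?_⟩
  rw [integral_Ioi_of_hasDerivAt_of_nonneg' hderiv hpos hlim]
  simp [G, neg_div, arctan_neg]

section Polyconvolution

local notation "μ₊" => volume.restrict (Ioi (0 : ℝ))

lemma ae_integrable_Phi_and_integral_abs_le :
    ∀ᵐ y ∂μ₊.prod (μ₊.prod μ₊), Integrable (Phi · y.1 y.2.1 y.2.2) μ₊ ∧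
      ∫ x, |Phi x y.1 y.2.1 y.2.2| ∂μ₊ ≤ π := by
  have hvw : ∀ᵐ z ∂μ₊.prod μ₊, 0 < z.1 + z.2 := by
    filter_upwards [Measure.quasiMeasurePreserving_fst.ae (ae_restrict_mem measurableSet_Ioi),
      Measure.quasiMeasurePreserving_snd.ae (ae_restrict_mem measurableSet_Ioi)] with z hv hw
    exact add_pos hv hw
  filter_upwards [Measure.quasiMeasurePreserving_snd.ae hvw] with y hy
  obtain ⟨hint, hval⟩ := integrableOn_Phi_and_integral_eq_pi hy y.1
  simp only [abs_of_nonneg (Phi_nonneg hy.le _ _)]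
  exact ⟨hint, hval.le⟩

lemma integrable_Phi_mul_prod {f g h : ℝ → ℝ} (hf : IntegrableOn f (Ioi 0))
    (hg : IntegrableOn g (Ioi 0)) (hh : IntegrableOn h (Ioi 0)) :
    Integrable (uncurry fun x (y : ℝ × ℝ × ℝ) =>
      Phi x y.1 y.2.1 y.2.2 * (f y.1 * (g y.2.1 * h y.2.2)))
      (μ₊.prod (μ₊.prod (μ₊.prod μ₊))) :=
  integrable_prod_kernel_mul measurable_Phi.aestronglyMeasurable
    ae_integrable_Phi_and_integral_abs_le (hf.mul_prod (hg.mul_prod hh))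

lemma P_ae_eq_integral_prod {f g h : ℝ → ℝ} (hf : IntegrableOn f (Ioi 0))
    (hg : IntegrableOn g (Ioi 0)) (hh : IntegrableOn h (Ioi 0)) :
    P f g h =ᵐ[μ₊] fun x => 1 / π *
      ∫ y, Phi x y.1 y.2.1 y.2.2 * (f y.1 * (g y.2.1 * h y.2.2)) ∂μ₊.prod (μ₊.prod μ₊) := by
  filter_upwards [(integrable_Phi_mul_prod hf hg hh).prod_right_ae] with x hx
  simp only [uncurry_apply_pair] at hx
  rw [P, integral_prod_prod hx]
  simp only [mul_assoc]

theorem stmt_3 (f g h : ℝ → ℝ)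
    (hf : IntegrableOn f (Ioi 0)) (hg : IntegrableOn g (Ioi 0)) (hh : IntegrableOn h (Ioi 0)) :
    IntegrableOn (P f g h) (Ioi 0) ∧
      (∫ x in Ioi (0 : ℝ), |P f g h x|) ≤
        (∫ x in Ioi (0 : ℝ), |f x|) * (∫ x in Ioi (0 : ℝ), |g x|) *
          (∫ x in Ioi (0 : ℝ), |h x|) := by
  have hP := P_ae_eq_integral_prod hf hg hh
  refine ⟨((integrable_Phi_mul_prod hf hg hh).integral_prod_left.const_mul _).congr hP.symm, ?_⟩
  calc ∫ x in Ioi (0 : ℝ), |P f g h x|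
      = 1 / π * ∫ x in Ioi 0, |∫ y, Phi x y.1 y.2.1 y.2.2 * (f y.1 * (g y.2.1 * h y.2.2))
          ∂μ₊.prod (μ₊.prod μ₊)| := by
        rw [← integral_const_mul]
        refine integral_congr_ae ?_
        filter_upwards [hP] with x hx
        rw [hx, abs_mul, abs_of_pos (by positivity)]
    _ ≤ 1 / π * (π * ∫ y : ℝ × ℝ × ℝ, |f y.1 * (g y.2.1 * h y.2.2)| ∂μ₊.prod (μ₊.prod μ₊)) := by
        gcongr
        exact integral_abs_integral_kernel_mul_le measurable_Phi.aestronglyMeasurable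
          ae_integrable_Phi_and_integral_abs_le (hf.mul_prod (hg.mul_prod hh))
    _ = _ := by
        rw [integral_abs_mul_prod_prod]
        field_simp

end Polyconvolution
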